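/- For any state S of the ordered Zeckendorf game whose Fibonacci values sum to n, every sequence of legal moves starting from S has length at most f(S) − n. -/
import Mathlib


/-- Fibonacci numbers indexed so that `F 1 = 1`, `F 2 = 2`,
and `F (i+1) = F i + F (i-1)`. -/
def F (i : ℕ) : ℕ := Nat.fib (i + 1)

/-- A single legal move of the ordered Zeckendorf game, acting on an
adjacent pair of entries of the list of indices. -/
inductive Move : List ℕ → List ℕ → Prop
  | merge (a b : List ℕ) (i : ℕ) (hi : 1 ≤ i) :
      Move (a ++ [i, i + 1] ++ b) (a ++ [i + 2] ++ b)
  | mergeOnes (a b : List ℕ) :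
      Move (a ++ [1, 1] ++ b) (a ++ [2] ++ b)
  | split (a b : List ℕ) (i : ℕ) (hi : 2 < i) :
      Move (a ++ [i, i] ++ b) (a ++ [i - 2, i + 1] ++ b)
  | splitTwos (a b : List ℕ) :
      Move (a ++ [2, 2] ++ b) (a ++ [1, 3] ++ b)
  | switch (a b : List ℕ) (i j : ℕ) (hj : 1 ≤ j) (hij : j < i) :
      Move (a ++ [i, j] ++ b) (a ++ [j, i] ++ b)

/-- A play of the ordered Zeckendorf game on `n` with `m` moves:
the initial state is `n` copies of `1`, and each step is a legal move. -/
def IsPlay (n : ℕ) (s : ℕ → List ℕ) (m : ℕ) : Prop :=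
  s 0 = List.replicate n 1 ∧ ∀ t < m, Move (s t) (s (t + 1))

/-- A state is terminal if no legal move applies to it. -/
def Terminal (S : List ℕ) : Prop := ∀ T, ¬ Move S T

/-- The total Fibonacci value of a state. -/
def val (S : List ℕ) : ℕ := (S.map F).sum

/-- The monovariant `f(S) = Σ_{j=1}^k (k+1−j)·F_{i_j}` (here with
`j` running over 0-based positions, so the weight of position `j` is
`k − j`). -/
def f (S : List ℕ) : ℕ := ∑ j : Fin S.length, (S.length - (j : ℕ)) * F (S.get j)

/-- `M n` is the maximal number of moves in a completed play of the
ordered Zeckendorf game on `n`. -/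
noncomputable def M (n : ℕ) : ℕ :=
  sSup {m | ∃ s : ℕ → List ℕ, IsPlay n s m ∧ Terminal (s m)}

/-- The golden ratio `φ = (1+√5)/2`. -/
noncomputable def phi : ℝ := (1 + Real.sqrt 5) / 2

/-- Logarithm to base `φ`. -/
noncomputable def logphi (x : ℝ) : ℝ := Real.log x / Real.log phi

def g : List ℕ → ℕ
  | [] => 0
  | x :: l => (l.length + 1) * F x + g l

lemma f_eq_g (S : List ℕ) : f S = g S := by
  induction S with
  | nil => simp [f, g]
  | cons x l ih =>
    rw [g, ← ih, f, f]
    show (∑ j : Fin (l.length + 1), ((x :: l).length - (j : ℕ)) * F ((x :: l).get j)) = _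
    rw [Fin.sum_univ_succ]
    simp [Nat.succ_sub_succ]

lemma val_cons (x : ℕ) (l : List ℕ) : val (x :: l) = F x + val l := by simp [val]

lemma val_append (a b : List ℕ) : val (a ++ b) = val a + val b := by simp [val]

lemma g_append (a l : List ℕ) : g (a ++ l) = g a + l.length * val a + g l := by
  induction a with
  | nil => simp [g, val]
  | cons x a ih => simp [g, val_cons, ih, List.length_append]; ring

lemma g_app2 (a m b : List ℕ) : g (a ++ m ++ b) =
    g a + (m.length + b.length) * val a + g m + b.length * val m + g b := by
  rw [List.append_assoc, g_append, g_append]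
  simp only [val_append, List.length_append]
  ring

lemma val_le_g (l : List ℕ) : val l ≤ g l := by
  induction l with
  | nil => simp [val, g]
  | cons x l ih =>
    rw [val_cons, g]
    have : F x ≤ (l.length + 1) * F x := Nat.le_mul_of_pos_left _ (by omega)
    omega

lemma F_pos (i : ℕ) : 1 ≤ F i := Nat.fib_pos.2 (by omega)

lemma F_lt_F {j i : ℕ} (hj : 1 ≤ j) (hij : j < i) : F j < F i := by
  have h1 : Nat.fib (j + 1) < Nat.fib (j + 2) := by
    have := Nat.fib_pos.2 (show 0 < j by omega)
    rw [Nat.fib_add_two]; omega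
  have h2 : Nat.fib (j + 2) ≤ Nat.fib (i + 1) := Nat.fib_mono (by omega)
  unfold F; omega

lemma val_nil : val [] = 0 := rfl

lemma F_add_two (i : ℕ) : F (i + 2) = F i + F (i + 1) := Nat.fib_add_two

lemma move_val {S T : List ℕ} (h : Move S T) : val T = val S := by
  cases h with
  | merge a b i hi =>
    simp only [val_append, val_cons, val_nil, F_add_two]
    ring
  | mergeOnes a b =>
    have : F 2 = F 1 + F 1 := rfl
    simp only [val_append, val_cons, val_nil, this]; ring
  | split a b i hi =>
    obtain ⟨k, rfl⟩ : ∃ k, i = k + 3 := ⟨i - 3, by omega⟩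
    have h1 : F (k + 4) = F (k + 2) + F (k + 3) := F_add_two (k + 2)
    have h2 : F (k + 3) = F (k + 1) + F (k + 2) := F_add_two (k + 1)
    simp only [val_append, val_cons, val_nil,
      show k + 3 - 2 = k + 1 from rfl, show k + 3 + 1 = k + 4 from rfl, h1, h2]
    ring
  | splitTwos a b =>
    have : F 1 + F 3 = F 2 + F 2 := rfl
    simp only [val_append, val_cons, val_nil]; omega
  | switch a b i j hj hij =>
    simp only [val_append, val_cons, val_nil]; ring

lemma move_g {S T : List ℕ} (h : Move S T) : g T + 1 ≤ g S := by
  cases h with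
  | merge a b i hi =>
    rw [g_app2, g_app2]
    simp only [g, val_cons, val_nil, List.length_cons,
      List.length_nil, F_add_two]
    nlinarith [F_pos i, Nat.zero_le (val a)]
  | mergeOnes a b =>
    rw [g_app2, g_app2]
    have h1 : F 1 = 1 := rfl
    have h2 : F 2 = 2 := rfl
    simp only [g, val_cons, val_nil, List.length_cons,
      List.length_nil, h1, h2]
    nlinarith [Nat.zero_le (val a)]
  | split a b i hi =>
    obtain ⟨k, rfl⟩ : ∃ k, i = k + 3 := ⟨i - 3, by omega⟩
    have h1 : F (k + 4) = F (k + 2) + F (k + 3) := F_add_two (k + 2)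
    have h2 : F (k + 3) = F (k + 1) + F (k + 2) := F_add_two (k + 1)
    rw [g_app2, g_app2]
    simp only [g, val_cons, val_nil, List.length_cons,
      List.length_nil, show k + 3 - 2 = k + 1 from rfl, show k + 3 + 1 = k + 4 from rfl,
      h1, h2]
    nlinarith [F_pos (k + 2)]
  | splitTwos a b =>
    rw [g_app2, g_app2]
    have h1 : F 1 = 1 := rfl
    have h2 : F 2 = 2 := rfl
    have h3 : F 3 = 3 := rfl
    simp only [g, val_cons, val_nil, List.length_cons,
      List.length_nil, h1, h2, h3]
    nlinarith []
  | switch a b i j hj hij =>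
    rw [g_app2, g_app2]
    simp only [g, val_cons, val_nil, List.length_cons,
      List.length_nil]
    nlinarith [F_lt_F hj hij]


theorem stmt_13 (S : List ℕ) (hpos : ∀ x ∈ S, 1 ≤ x) (n : ℕ) (hn : val S = n)
    (s : ℕ → List ℕ) (m : ℕ) (h0 : s 0 = S)
    (hmoves : ∀ t < m, Move (s t) (s (t + 1))) :
    m ≤ f S - n := by
  have key : ∀ t, t ≤ m → g (s t) + t ≤ g S ∧ val (s t) = n := by
    intro t ht
    induction t with
    | zero => simp [h0, hn]
    | succ t ih =>
      obtain ⟨h1, h2⟩ := ih (by omega)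
      have hm := hmoves t (by omega)
      exact ⟨by have := move_g hm; omega, (move_val hm).trans h2⟩
  obtain ⟨h1, h2⟩ := key m le_rfl
  have h3 : n ≤ g (s m) := h2 ▸ val_le_g (s m)
  have h4 : f S = g S := f_eq_g S
  omega
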